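/- Let L be a finite-dimensional complex right Leibniz algebra with L/I ≅ sl_n (n ≥ 3) and dim I = 2. Then [I, L] = 0 and L ≅ sl_n ⊕ I, the direct sum of the Lie algebra sl_n and a 2-dimensional abelian ideal. -/

import Mathlib

/-!
Left multiplication by `I` vanishes because `I` is spanned by squares and the Leibniz identity
gives `B x (B y y) = 0`. Right multiplication `a ↦ B a y` therefore kills `I` when `y ∈ I`, so it
factors through `π`, and the Leibniz identity turns its negative into a Lie algebra
representation of `sl n` on the plane `I`. Such a representation is zero: an elementary matrix
`E i j` is the bracket `⁅E i k, E k j⁆` of two matrices commuting with it (a third index `k`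
exists as `n ≥ 3`), and in `gl₂` a commutator commuting with both of its factors vanishes. The
`E i j` and their brackets `⁅E i j, E j i⁆ = E i i - E j j` span `sl n`.
-/

attribute [local instance 100] LieRing.ofAssociativeRing

namespace Matrix

variable {K : Type*} [Field K] [NeZero (2 : K)]

-- Fails in characteristic 2, e.g. for `A = single 0 1 1`, `B = single 1 0 1`.
theorem fin_two_lie_eq_zero_of_lie_lie_eq_zero {A B : Matrix (Fin 2) (Fin 2) K}
    (hA : ⁅A, ⁅A, B⁆⁆ = 0) (hB : ⁅B, ⁅A, B⁆⁆ = 0) : ⁅A, B⁆ = 0 := by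
  simp only [Ring.lie_def, ← Matrix.ext_iff, mul_apply, sub_apply, Fin.sum_univ_two,
    zero_apply, Fin.forall_fin_two] at hA hB ⊢
  obtain ⟨⟨P00, P01⟩, P10, -⟩ := hA
  obtain ⟨⟨-, Q01⟩, Q10, -⟩ := hB
  -- The square of each entry of `⁅A, B⁆` (twice it, on the diagonal) is a combination of
  -- the hypotheses.
  have hC01 : A 0 0 * B 0 1 + A 0 1 * B 1 1 - (B 0 0 * A 0 1 + B 0 1 * A 1 1) = 0 := by
    refine pow_eq_zero_iff (n := 2) (by norm_num) |>.mp ?_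
    linear_combination (B 0 1) * P01 - (A 0 1) * Q01
  have hC10 : A 1 0 * B 0 0 + A 1 1 * B 1 0 - (B 1 0 * A 0 0 + B 1 1 * A 1 0) = 0 := by
    refine pow_eq_zero_iff (n := 2) (by norm_num) |>.mp ?_
    linear_combination (B 1 0) * P10 - (A 1 0) * Q10
  have hC00 : A 0 1 * B 1 0 - B 0 1 * A 1 0 = 0 := by
    have h2C00 : 2 * (A 0 1 * B 1 0 - B 0 1 * A 1 0) ^ 2 = 0 := by
      linear_combination
        (-2 * (A 1 0 * B 0 0 + A 1 1 * B 1 0 - (B 1 0 * A 0 0 + B 1 1 * A 1 0))) * hC01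
        - ((B 0 0 - B 1 1) * P00 + B 1 0 * P01 + B 0 1 * P10)
    exact pow_eq_zero_iff (n := 2) (by norm_num) |>.mp
      ((mul_eq_zero.mp h2C00).resolve_left two_ne_zero)
  exact ⟨⟨by linear_combination hC00, by linear_combination hC01⟩,
    by linear_combination hC10, by linear_combination -hC00⟩

end Matrix

section

variable {K : Type*} [Field K] [NeZero (2 : K)] {V : Type*} [AddCommGroup V] [Module K V]

theorem Module.End.lie_eq_zero_of_lie_lie_eq_zero (hV : Module.finrank K V = 2)
    {f g : Module.End K V} (hf : ⁅f, ⁅f, g⁆⁆ = 0) (hg : ⁅g, ⁅f, g⁆⁆ = 0) : ⁅f, g⁆ = 0 := by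
  have : Module.Finite K V := Module.finite_of_finrank_eq_succ hV
  let e := (LinearMap.toMatrixAlgEquiv (Module.finBasisOfFinrankEq K V hV)).toLieEquiv
  have h := Matrix.fin_two_lie_eq_zero_of_lie_lie_eq_zero (A := e f) (B := e g)
    (by rw [← e.map_lie, ← e.map_lie, hf, map_zero])
    (by rw [← e.map_lie, ← e.map_lie, hg, map_zero])
  rwa [← e.map_lie, map_eq_zero_iff e e.injective] at h

theorem LieHom.map_lie_eq_zero_of_finrank_eq_two {L : Type*} [LieRing L] [LieAlgebra K L]
    (hV : Module.finrank K V = 2) (ρ : L →ₗ⁅K⁆ Module.End K V) {x y : L}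
    (hx : ⁅x, ⁅x, y⁆⁆ = 0) (hy : ⁅y, ⁅x, y⁆⁆ = 0) : ρ ⁅x, y⁆ = 0 := by
  rw [ρ.map_lie]
  apply Module.End.lie_eq_zero_of_lie_lie_eq_zero hV
  · rw [← ρ.map_lie, ← ρ.map_lie, hx, map_zero]
  · rw [← ρ.map_lie, ← ρ.map_lie, hy, map_zero]

end

namespace LieAlgebra.SpecialLinear

variable {R : Type*} [CommRing R] {n : Type*} [DecidableEq n] [Fintype n]

theorem lie_single_single_of_ne {i j k l : n} (hij : i ≠ j) (hkl : k ≠ l) (hjk : j ≠ k)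
    (hli : l ≠ i) (r s : R) : ⁅single i j hij r, single k l hkl s⁆ = 0 := by
  ext : 1
  simp [Ring.lie_def, hjk, hli]

theorem lie_single_single {i j k : n} (hij : i ≠ j) (hjk : j ≠ k) (hik : i ≠ k) (r s : R) :
    ⁅single i j hij r, single j k hjk s⁆ = single i k hik (r * s) := by
  ext : 1
  simp [Ring.lie_def, hik.symm]

theorem lie_single_single_swap {i j : n} (hij : i ≠ j) (r s : R) :
    ⁅single i j hij r, single j i hij.symm s⁆ = singleSubSingle i j (r * s) := by
  ext : 1
  simp [Ring.lie_def, mul_comm s r]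

theorem eq_sum_singleSubSingle_add_sum_single (i₀ : n) (A : sl n R) :
    A = ∑ i, singleSubSingle i i₀ (A.val i i) +
      ∑ i, ∑ j, if h : i = j then 0 else single i j h (A.val i j) := by
  have htr : ∑ i, A.val i i = 0 := A.2
  apply Subtype.ext
  ext a b
  have hoff : ∀ i j, (if i = j then 0 else if i = a then if j = b then A.val i j else 0 else 0) =
      if a = i then if b = j then (if a = b then 0 else A.val a b) else 0 else 0 := by
    intro i j; split_ifs <;> grind
  simp [Matrix.sum_apply, apply_dite Subtype.val, apply_ite (fun M : Matrix n n R => M a b),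
    Matrix.single_apply, Finset.sum_sub_distrib, ite_and, hoff]
  by_cases hab : a = b
  · subst hab
    simp [htr]
  · simp [hab, htr]

theorem lieHom_eq_zero_of_finrank_eq_two {K : Type*} [Field K] [NeZero (2 : K)] {V : Type*}
    [AddCommGroup V] [Module K V] (hn : 3 ≤ Fintype.card n) (hV : Module.finrank K V = 2)
    (ρ : sl n K →ₗ⁅K⁆ Module.End K V) : ρ = 0 := by
  have hsingle : ∀ i j (hij : i ≠ j) (r : K), ρ (single i j hij r) = 0 := by
    intro i j hij r
    obtain ⟨k, hki, hkj⟩ := ENat.exists_ne_ne_of_three_le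
      (by simpa [ENat.card_eq_coe_fintype_card] using hn) i j
    have hbracket := lie_single_single hki.symm hkj hij r 1
    rw [mul_one] at hbracket
    rw [← hbracket]
    apply ρ.map_lie_eq_zero_of_finrank_eq_two hV
    · rw [hbracket, lie_single_single_of_ne _ _ hki hij.symm]
    · rw [hbracket, lie_single_single_of_ne _ _ hij.symm hkj.symm]
  have hdiag : ∀ i j (r : K), ρ (singleSubSingle i j r) = 0 := by
    intro i j r
    rcases eq_or_ne i j with rfl | hij
    · rw [show singleSubSingle i i r = 0 by ext : 1; simp, map_zero]
    · rw [← mul_one r, ← lie_single_single_swap hij, ρ.map_lie, hsingle, zero_lie]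
  obtain ⟨i₀⟩ : Nonempty n := Fintype.card_pos_iff.mp (by omega)
  ext A : 1
  rw [eq_sum_singleSubSingle_add_sum_single i₀ A]
  simp [hsingle, hdiag, apply_dite]

end LieAlgebra.SpecialLinear

section Leibniz

variable {R L : Type*} [CommRing R] [AddCommGroup L] [Module R L]

def IsRightLeibniz (B : L →ₗ[R] L →ₗ[R] L) : Prop :=
  ∀ x y z : L, B x (B y z) = B (B x y) z - B (B x z) y

variable {B : L →ₗ[R] L →ₗ[R] L}

theorem IsRightLeibniz.apply_eq_zero_of_mem_span_squares (hB : IsRightLeibniz B) {a : L}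
    (ha : a ∈ Submodule.span R {a : L | ∃ x : L, a = B x x}) (x : L) : B x a = 0 := by
  have hle : Submodule.span R {a : L | ∃ x : L, a = B x x} ≤ LinearMap.ker (B x) := by
    rw [Submodule.span_le]
    rintro _ ⟨y, rfl⟩
    simp [hB x]
  exact hle ha

variable (B) in
def rightMul (I : Submodule R L) (hI : ∀ a ∈ I, ∀ y, B a y ∈ I) : L →ₗ[R] Module.End R I where
  toFun y := (B.flip y).restrict fun a ha => hI a ha y
  map_add' y z := LinearMap.ext fun a => Subtype.ext (map_add (B a) y z)
  map_smul' r y := LinearMap.ext fun a => Subtype.ext (map_smul (B a) r y)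

@[simp]
theorem coe_rightMul_apply {I : Submodule R L} (hI : ∀ a ∈ I, ∀ y, B a y ∈ I) (y : L) (a : I) :
    (rightMul B I hI y a : L) = B a y :=
  rfl

theorem IsRightLeibniz.rightMul_apply_eq_lie (hB : IsRightLeibniz B) {I : Submodule R L}
    (hI : ∀ a ∈ I, ∀ y, B a y ∈ I) (y z : L) :
    rightMul B I hI (B y z) = ⁅rightMul B I hI z, rightMul B I hI y⁆ := by
  ext a
  simp [Ring.lie_def, hB _ y z]

theorem exists_lieHom_apply_eq {g M : Type*} [LieRing g] [LieAlgebra R g] [Module.Projective R g]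
    [LieRing M] [LieAlgebra R M] {π : L →ₗ[R] g} (hπ : Function.Surjective π)
    (hπB : ∀ a b, π (B a b) = ⁅π a, π b⁆) {F : L →ₗ[R] M} (hF : LinearMap.ker π ≤ LinearMap.ker F)
    (hFB : ∀ a b, F (B a b) = ⁅F a, F b⁆) : ∃ ρ : g →ₗ⁅R⁆ M, ∀ a, ρ (π a) = F a := by
  obtain ⟨s, hs⟩ := π.exists_rightInverse_of_surjective (LinearMap.range_eq_top.mpr hπ)
  have hπs : ∀ x, π (s x) = x := LinearMap.congr_fun hs
  have hFs : ∀ a, F (s (π a)) = F a := by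
    intro a
    rw [← sub_eq_zero, ← map_sub]
    exact hF (by simp [hπs])
  refine ⟨{ F ∘ₗ s with map_lie' := fun {x y} => ?_ }, fun a => hFs a⟩
  simp only [AddHom.toFun_eq_coe, LinearMap.coe_toAddHom, LinearMap.coe_comp, Function.comp_apply]
  conv_lhs => rw [← hπs x, ← hπs y, ← hπB, hFs]
  exact hFB _ _

end Leibniz

open LieAlgebra.SpecialLinear in
theorem sln_two_dim_I_trivial_general
    (n : ℕ) (hn : 3 ≤ n)
    (L : Type*) [AddCommGroup L] [Module ℂ L]
    (B : L →ₗ[ℂ] L →ₗ[ℂ] L)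
    (leib : ∀ x y z : L, B x (B y z) = B (B x y) z - B (B x z) y)
    (I : Submodule ℂ L)
    (hI : I = Submodule.span ℂ {a : L | ∃ x : L, a = B x x})
    (hdim : Module.finrank ℂ I = 2)
    (π : L →ₗ[ℂ] ↥(sl (Fin n) ℂ))
    (hsurj : Function.Surjective π)
    (hker : LinearMap.ker π = I)
    (hhom : ∀ a b : L, π (B a b) = ⁅π a, π b⁆) :
    ∀ a ∈ I, ∀ y : L, B a y = 0 ∧ B y a = 0 := by
  have hxI : ∀ a ∈ I, ∀ x, B x a = 0 := fun a ha =>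
    IsRightLeibniz.apply_eq_zero_of_mem_span_squares leib (hI ▸ ha)
  have hIx : ∀ a ∈ I, ∀ y, B a y ∈ I := by
    intro a ha y
    rw [← hker, LinearMap.mem_ker] at ha ⊢
    rw [hhom, ha, zero_lie]
  obtain ⟨ρ, hρ⟩ := exists_lieHom_apply_eq (F := -rightMul B I hIx) hsurj hhom
    (fun y hy => LinearMap.ext fun a => Subtype.ext (by simp [hxI y (hker ▸ hy)]))
    (fun y z => by simp only [LinearMap.neg_apply,
      IsRightLeibniz.rightMul_apply_eq_lie leib, neg_lie, lie_neg, lie_skew])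
  have hρ0 : ρ = 0 := lieHom_eq_zero_of_finrank_eq_two (by simpa using hn) hdim ρ
  intro a ha y
  refine ⟨?_, hxI a ha y⟩
  simpa [hρ0] using congr(($(hρ y) ⟨a, ha⟩ : L))

open LieAlgebra.SpecialLinear in
/-- Let `L` be a finite-dimensional complex right Leibniz algebra with
`L/I ≅ sl_n` (`n ≥ 3`), realized by a surjective bracket-preserving linear map
`π : L → sl_n` with kernel `I`, and with `dim I = 2`.  Then all products with `I`
vanish, so `L ≅ sl_n ⊕ I` is the direct sum of `sl_n` and a 2-dimensional abelian
ideal. -/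
theorem sln_two_dim_I_trivial
    (n : ℕ) (hn : 3 ≤ n)
    (L : Type*) [AddCommGroup L] [Module ℂ L] [FiniteDimensional ℂ L]
    (B : L →ₗ[ℂ] L →ₗ[ℂ] L)
    (leib : ∀ x y z : L, B x (B y z) = B (B x y) z - B (B x z) y)
    (I : Submodule ℂ L)
    (hI : I = Submodule.span ℂ {a : L | ∃ x : L, a = B x x})
    (hdim : Module.finrank ℂ I = 2)
    (π : L →ₗ[ℂ] ↥(sl (Fin n) ℂ))
    (hsurj : Function.Surjective π)
    (hker : LinearMap.ker π = I)
    (hhom : ∀ a b : L, π (B a b) = ⁅π a, π b⁆) :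
    ∀ a ∈ I, ∀ y : L, B a y = 0 ∧ B y a = 0 :=
  sln_two_dim_I_trivial_general n hn L B leib I hI hdim π hsurj hker hhom
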